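/- Suppose geodesics are unique and let u, v, v' < n in Z^2 with v ⪯ u ⪯ v' (where p ⪯ q means p_1 ≤ q_1 and p_2 ≥ q_2). Then d(C^{v, v'; n}) = max{ d(C^{u, v; n}), d(C^{u, v'; n}) }, where C^{a,b;w} denotes the first coalescence point of Γ_{a,w} and Γ_{b,w} and d(p) = p_1 + p_2. -/

import Mathlib

open MeasureTheory

/-- A single up-right step in `ℤ × ℤ`. -/
def UpStep (p q : ℤ × ℤ) : Prop := q = (p.1 + 1, p.2) ∨ q = (p.1, p.2 + 1)

/-- `γ` is an up-right lattice path from `u` to `v`. -/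
def IsUpRightPath (γ : List (ℤ × ℤ)) (u v : ℤ × ℤ) : Prop :=
  γ.head? = some u ∧ γ.getLast? = some v ∧ γ.Chain' UpStep

/-- The passage time of a path: the sum of the weights of its vertices. -/
def pathWeight (ξ : ℤ × ℤ → ℝ) (γ : List (ℤ × ℤ)) : ℝ := (γ.map ξ).sum

/-- `γ` is a geodesic from `u` to `v`: an up-right path maximizing the passage time. -/
def IsGeodesic (ξ : ℤ × ℤ → ℝ) (u v : ℤ × ℤ) (γ : List (ℤ × ℤ)) : Prop :=
  IsUpRightPath γ u v ∧ ∀ γ', IsUpRightPath γ' u v → pathWeight ξ γ' ≤ pathWeight ξ γ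

/-!
By uniqueness, the part of `Γ a n` after any of its points `p` is `Γ p n`, so two geodesics to `n`
coincide after their first common point. Up-right paths advance one level `p.1 + p.2` per step
and move sideways by at most one, so paths starting in the order `v ⪯ u` can only change sides by
meeting; hence geodesics to `n` stay ordered. Thus `Γ u n` is sandwiched between `Γ v n` and
`Γ v' n` and passes through `C^{v,v';n}`, which gives `≥`; conversely all three geodesics coincide
after the later of `C^{u,v;n}` and `C^{u,v';n}`, which gives `≤`.
-/

namespace UpStep

variable {p q : ℤ × ℤ}

theorem level_eq (h : UpStep p q) : q.1 + q.2 = p.1 + p.2 + 1 := by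
  rcases h with rfl | rfl <;> dsimp <;> ring

theorem le (h : UpStep p q) : p ≤ q := by
  rcases h with rfl | rfl <;> simp [Prod.le_def]

theorem fst_le_succ (h : UpStep p q) : q.1 ≤ p.1 + 1 := by
  rcases h with rfl | rfl <;> simp

end UpStep

namespace IsUpRightPath

variable {γ : List (ℤ × ℤ)} {a w : ℤ × ℤ}

theorem getElem_zero (h : IsUpRightPath γ a w) (hγ : 0 < γ.length) : γ[0] = a := by
  simpa [List.head?_eq_getElem?, List.getElem?_eq_getElem hγ] using h.1

theorem level_getElem (h : IsUpRightPath γ a w) :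
    ∀ (i : ℕ) (hi : i < γ.length), γ[i].1 + γ[i].2 = a.1 + a.2 + i
  | 0, hi => by simp [h.getElem_zero hi]
  | i + 1, hi => by
    rw [(h.2.2.getElem i hi).level_eq, h.level_getElem i (by omega)]
    push_cast
    ring

theorem le_of_mem (h : IsUpRightPath γ a w) {p : ℤ × ℤ} (hp : p ∈ γ) : a ≤ p ∧ p ≤ w := by
  have hmono : γ.Pairwise (· ≤ ·) := (h.2.2.imp fun _ _ hs => hs.le).pairwise
  obtain ⟨t, rfl⟩ := List.head?_eq_some_iff.mp h.1
  obtain ⟨s, hs⟩ := List.getLast?_eq_some_iff.mp h.2.1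
  refine ⟨?_, ?_⟩
  · rcases List.mem_cons.mp hp with rfl | hp
    · exact le_rfl
    · exact (List.pairwise_cons.mp hmono).1 p hp
  · rw [hs] at hp hmono
    rcases List.mem_append.mp hp with hp | hp
    · exact (List.pairwise_append.mp hmono).2.2 p hp w (List.mem_singleton_self w)
    · rw [List.mem_singleton.mp hp]

theorem eq_of_level_eq (h : IsUpRightPath γ a w) {p q : ℤ × ℤ} (hp : p ∈ γ) (hq : q ∈ γ)
    (hpq : p.1 + p.2 = q.1 + q.2) : p = q := by
  obtain ⟨i, hi, rfl⟩ := List.getElem_of_mem hp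
  obtain ⟨j, hj, rfl⟩ := List.getElem_of_mem hq
  obtain rfl : i = j := by
    have := h.level_getElem i hi
    have := h.level_getElem j hj
    omega
  rfl

theorem getElem_length_sub_one (h : IsUpRightPath γ a w) (hγ : γ.length - 1 < γ.length) :
    γ[γ.length - 1] = w := by
  simpa [List.getLast?_eq_getElem?, List.getElem?_eq_getElem hγ] using h.2.1

theorem exists_mem_level_eq (h : IsUpRightPath γ a w) {k : ℤ} (hak : a.1 + a.2 ≤ k)
    (hkw : k ≤ w.1 + w.2) : ∃ p ∈ γ, p.1 + p.2 = k := by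
  have hγ : 0 < γ.length := List.length_pos_iff_exists_mem.mpr ⟨a, List.mem_of_mem_head? h.1⟩
  have hlength := h.level_getElem (γ.length - 1) (by omega)
  rw [h.getElem_length_sub_one (by omega)] at hlength
  have hi : (k - (a.1 + a.2)).toNat < γ.length := by omega
  refine ⟨γ[_], List.getElem_mem hi, ?_⟩
  rw [h.level_getElem _ hi]
  omega

end IsUpRightPath

-- Discrete non-crossing: paths leaving in the order `a ⪯ b` can swap sides only where they meet.
theorem IsUpRightPath.exists_mem_mem_of_fst_lt {γ δ : List (ℤ × ℤ)} {a b w w' : ℤ × ℤ}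
    (hγ : IsUpRightPath γ a w) (hδ : IsUpRightPath δ b w') (hab : a.1 ≤ b.1 ∧ b.2 ≤ a.2)
    {p q : ℤ × ℤ} (hp : p ∈ γ) (hq : q ∈ δ) (hpq : p.1 + p.2 = q.1 + q.2) (hlt : q.1 < p.1) :
    ∃ r ∈ γ, r ∈ δ ∧ r.1 + r.2 ≤ p.1 + p.2 := by
  obtain ⟨i, hi, rfl⟩ := List.getElem_of_mem hp
  clear hp
  induction i generalizing q with
  | zero =>
    have hbq := (hδ.le_of_mem hq).1.1
    rw [hγ.getElem_zero hi] at hlt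
    omega
  | succ i ih =>
    obtain ⟨j, hj, rfl⟩ := List.getElem_of_mem hq
    cases j with
    | zero =>
      have hap := (hγ.le_of_mem (List.getElem_mem hi)).1.2
      rw [hδ.getElem_zero hj] at hpq hlt
      omega
    | succ j =>
      have hγi := hγ.2.2.getElem i hi
      have hδj := hδ.2.2.getElem j hj
      have hlevel : γ[i].1 + γ[i].2 = δ[j].1 + δ[j].2 := by
        linarith [hγi.level_eq, hδj.level_eq]
      by_cases hlt' : δ[j].1 < γ[i].1
      · obtain ⟨r, hrγ, hrδ, hr⟩ := ih (List.getElem_mem _) (by omega) hlevel hlt'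
        exact ⟨r, hrγ, hrδ, by linarith [hγi.level_eq]⟩
      · -- a step moves the first coordinate by at most one, so the paths meet at level `i`
        have hmeet : γ[i] = δ[j] := by
          have := hγi.fst_le_succ
          have := hδj.le.1
          exact Prod.ext (by omega) (by omega)
        refine ⟨γ[i], List.getElem_mem _, ?_, by linarith [hγi.level_eq]⟩
        rw [hmeet]
        exact List.getElem_mem _

theorem pathWeight_append (ξ : ℤ × ℤ → ℝ) (l₁ l₂ : List (ℤ × ℤ)) :
    pathWeight ξ (l₁ ++ l₂) = pathWeight ξ l₁ + pathWeight ξ l₂ := by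
  simp [pathWeight]

theorem IsUpRightPath.append_right {s l l' : List (ℤ × ℤ)} {a c w : ℤ × ℤ}
    (h : IsUpRightPath (s ++ l) a w) (hl : l.head? = some c) (hl' : IsUpRightPath l' c w) :
    IsUpRightPath (s ++ l') a w := by
  obtain ⟨hhead, -, hchain⟩ := h
  obtain ⟨hhead', hlast', hchain'⟩ := hl'
  refine ⟨?_, ?_, ?_⟩
  · rwa [List.head?_append, hhead', ← hl, ← List.head?_append]
  · rw [List.getLast?_append, hlast']
    rfl
  · obtain ⟨hs, -, hjoin⟩ := List.isChain_append.mp hchain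
    exact hs.append hchain' (by rwa [hhead', ← hl])

theorem IsGeodesic.cons_of_append {ξ : ℤ × ℤ → ℝ} {s t : List (ℤ × ℤ)} {a p w : ℤ × ℤ}
    (h : IsGeodesic ξ a w (s ++ p :: t)) : IsGeodesic ξ p w (p :: t) := by
  refine ⟨⟨rfl, ?_, h.1.2.2.right_of_append⟩, fun γ hγ => ?_⟩
  · simpa [List.getLast?_append] using h.1.2.1
  · have := h.2 _ (h.1.append_right rfl hγ)
    rw [pathWeight_append, pathWeight_append] at this
    linarith

def UniqueGeodesics (ξ : ℤ × ℤ → ℝ) (Γ : ℤ × ℤ → ℤ × ℤ → List (ℤ × ℤ)) : Prop :=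
  ∀ u v : ℤ × ℤ, u ≤ v → ∀ γ, IsGeodesic ξ u v γ ↔ γ = Γ u v

namespace UniqueGeodesics

variable {ξ : ℤ × ℤ → ℝ} {Γ : ℤ × ℤ → ℤ × ℤ → List (ℤ × ℤ)} {a b nn p q : ℤ × ℤ}

theorem isGeodesic (hΓ : UniqueGeodesics ξ Γ) (h : a ≤ b) : IsGeodesic ξ a b (Γ a b) :=
  (hΓ a b h _).mpr rfl

theorem suffix_of_mem (hΓ : UniqueGeodesics ξ Γ) (ha : a ≤ nn) (hp : p ∈ Γ a nn) :
    Γ p nn <:+ Γ a nn := by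
  obtain ⟨s, t, hst⟩ := List.append_of_mem hp
  have hpn := ((hΓ.isGeodesic ha).1.le_of_mem hp).2
  have hg := hΓ.isGeodesic ha
  rw [hst] at hg ⊢
  rw [← (hΓ p nn hpn _).mp hg.cons_of_append]
  exact List.suffix_append s _

theorem mem_of_mem_of_level_le (hΓ : UniqueGeodesics ξ Γ) (ha : a ≤ nn) (hb : b ≤ nn)
    (hpa : p ∈ Γ a nn) (hpb : p ∈ Γ b nn) (hq : q ∈ Γ a nn) (hpq : p.1 + p.2 ≤ q.1 + q.2) :
    q ∈ Γ b nn := by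
  have hγ := (hΓ.isGeodesic ha).1
  have hqn := (hγ.le_of_mem hq).2
  obtain ⟨r, hr, hrq⟩ := (hΓ.isGeodesic (hγ.le_of_mem hpa).2).1.exists_mem_level_eq hpq
    (add_le_add hqn.1 hqn.2)
  obtain rfl : r = q := hγ.eq_of_level_eq ((hΓ.suffix_of_mem ha hpa).subset hr) hq hrq
  exact (hΓ.suffix_of_mem hb hpb).subset hr

theorem fst_le_of_level_eq (hΓ : UniqueGeodesics ξ Γ) (ha : a ≤ nn) (hb : b ≤ nn)
    (hab : a.1 ≤ b.1 ∧ b.2 ≤ a.2) (hp : p ∈ Γ a nn) (hq : q ∈ Γ b nn)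
    (hpq : p.1 + p.2 = q.1 + q.2) : p.1 ≤ q.1 := by
  by_contra! hlt
  have hγ := (hΓ.isGeodesic ha).1
  have hδ := (hΓ.isGeodesic hb).1
  obtain ⟨r, hra, hrb, hr⟩ := hγ.exists_mem_mem_of_fst_lt hδ hab hp hq hpq hlt
  obtain rfl := hδ.eq_of_level_eq (hΓ.mem_of_mem_of_level_le ha hb hra hrb hp hr) hq hpq
  exact lt_irrefl _ hlt

theorem mem_of_mem_of_mem_of_between (hΓ : UniqueGeodesics ξ Γ) {u v v' C : ℤ × ℤ}
    (hu : u ≤ nn) (hv : v ≤ nn) (hv' : v' ≤ nn)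
    (hvu : v.1 ≤ u.1 ∧ u.2 ≤ v.2) (huv' : u.1 ≤ v'.1 ∧ v'.2 ≤ u.2)
    (hCv : C ∈ Γ v nn) (hCv' : C ∈ Γ v' nn) : C ∈ Γ u nn := by
  obtain ⟨hvC, hCn⟩ := (hΓ.isGeodesic hv).1.le_of_mem hCv
  have hv'C := ((hΓ.isGeodesic hv').1.le_of_mem hCv').1
  obtain ⟨P, hP, hPC⟩ := (hΓ.isGeodesic hu).1.exists_mem_level_eq (k := C.1 + C.2)
    (by linarith [hvC.2, hv'C.1]) (add_le_add hCn.1 hCn.2)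
  have hCP := hΓ.fst_le_of_level_eq hv hu hvu hCv hP hPC.symm
  have hPC' := hΓ.fst_le_of_level_eq hu hv' huv' hP hCv' hPC
  obtain rfl : P = C := Prod.ext (by omega) (by omega)
  exact hP

end UniqueGeodesics

/-- If `v ⪯ u ⪯ v'`, then `d(C^{v,v';𝐧}) = max (d(C^{u,v;𝐧}), d(C^{u,v';𝐧}))`. -/
theorem stmt13 (ξ : ℤ × ℤ → ℝ) (Γ : ℤ × ℤ → ℤ × ℤ → List (ℤ × ℤ))
    (hΓ : ∀ u v : ℤ × ℤ, u ≤ v → IsGeodesic ξ u v (Γ u v))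
    (huniq : ∀ u v : ℤ × ℤ, u ≤ v → ∀ γ, IsGeodesic ξ u v γ → γ = Γ u v)
    (u v v' nn : ℤ × ℤ) (hu : u < nn) (hv : v < nn) (hv' : v' < nn)
    (hvu : v.1 ≤ u.1 ∧ u.2 ≤ v.2) (huv' : u.1 ≤ v'.1 ∧ v'.2 ≤ u.2)
    (C1 C2 C3 : ℤ × ℤ)
    (hC1a : C1 ∈ Γ v nn) (hC1b : C1 ∈ Γ v' nn)
    (hC1min : ∀ p : ℤ × ℤ, p ∈ Γ v nn → p ∈ Γ v' nn → C1.1 + C1.2 ≤ p.1 + p.2)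
    (hC2a : C2 ∈ Γ u nn) (hC2b : C2 ∈ Γ v nn)
    (hC2min : ∀ p : ℤ × ℤ, p ∈ Γ u nn → p ∈ Γ v nn → C2.1 + C2.2 ≤ p.1 + p.2)
    (hC3a : C3 ∈ Γ u nn) (hC3b : C3 ∈ Γ v' nn)
    (hC3min : ∀ p : ℤ × ℤ, p ∈ Γ u nn → p ∈ Γ v' nn → C3.1 + C3.2 ≤ p.1 + p.2) :
    C1.1 + C1.2 = max (C2.1 + C2.2) (C3.1 + C3.2) := by
  have hunique : UniqueGeodesics ξ Γ := fun a b hab γ =>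
    ⟨huniq a b hab γ, fun h => h ▸ hΓ a b hab⟩
  have hC1u := hunique.mem_of_mem_of_mem_of_between hu.le hv.le hv'.le hvu huv' hC1a hC1b
  have hC2C1 := hC2min C1 hC1u hC1a
  have hC3C1 := hC3min C1 hC1u hC1b
  rcases le_total (C2.1 + C2.2) (C3.1 + C3.2) with h | h
  · have := hC1min C3 (hunique.mem_of_mem_of_level_le hu.le hv.le hC2a hC2b hC3a h) hC3b
    omega
  · have := hC1min C2 hC2b (hunique.mem_of_mem_of_level_le hu.le hv'.le hC3a hC3b hC2a h)
    omega
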